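/- Let λ : ℕ → ℝ be summable with λ(n) ≥ 0 for all n, and let u, v ∈ ℓ² with ‖u‖ ≤ 1 and ‖v‖ ≤ 1. Then the family, indexed by all multi-indices I, given by I ↦ λ(|I|)·(|I|!/I!)·∏_j (conj(u(j))·v(j))^(I(j)) is summable, and its sum equals ∑'_n λ(n)·(⟪u, v⟫)^n, where ⟪u, v⟫ = ∑'_j conj(u(j))·v(j) is the ℓ² inner product. -/

import Mathlib

/-!
Write `w j = conj (u j) * v j`. By Hölder, `∑ ‖w j‖ ≤ ‖u‖ ‖v‖ ≤ 1`, so the family is dominated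
by `|λ(|I|)| · (|I|!/I!) ∏ ‖w j‖^(I j)`, whose sum over the multi-indices of degree `n` is
`|λ n| (∑ ‖w j‖)^n ≤ |λ n|`; the family is therefore absolutely summable and may be summed degree
by degree. In degree `n`, the multinomial theorem for `w` restricted to `{0, …, m - 1}` identifies
the partial sums over multi-indices supported there with `(∑_{j<m} w j)^n`, which tends to
`⟪u, v⟫^n` as `m → ∞`.
-/

open scoped BigOperators ComplexInnerProductSpace

/-- The degree `|I| = ∑_j I j` of a multi-index. -/
noncomputable def mdeg (I : ℕ →₀ ℕ) : ℕ := I.sum fun _ n => n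

/-- The factorial `I! = ∏_j (I j)!` of a multi-index. -/
noncomputable def mfact (I : ℕ →₀ ℕ) : ℕ := I.prod fun _ n => n.factorial

open Finset Filter

theorem Finset.sum_pow_eq_sum_finsuppAntidiag {ι R : Type*} [DecidableEq ι] [CommSemiring R]
    (s : Finset ι) (f : ι → R) (n : ℕ) :
    (∑ i ∈ s, f i) ^ n =
      ∑ I ∈ s.finsuppAntidiag n, (I.multinomial : R) * I.prod fun i k => f i ^ k := by
  rw [sum_pow_eq_sum_piAntidiag]
  symm
  refine sum_bij (fun I _ => ⇑I) (fun I hI => ?_) (fun _ _ _ _ => DFunLike.coe_injective.eq_iff.1)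
    (fun k hk => ?_) (fun I hI => ?_)
  · rw [mem_finsuppAntidiag] at hI
    exact mem_piAntidiag.2 ⟨hI.1, fun i hi => hI.2 (Finsupp.mem_support_iff.2 hi)⟩
  · rw [mem_piAntidiag] at hk
    exact ⟨Finsupp.onFinset s k fun i hi => hk.2 i hi,
      mem_finsuppAntidiag.2 ⟨hk.1, Finsupp.support_onFinset_subset⟩, rfl⟩
  · have hs := (mem_finsuppAntidiag.1 hI).2
    rw [Finsupp.multinomial_of_support_subset hs, Finsupp.prod_of_support_subset _ hs _ (by simp)]

theorem mfact_mul_multinomial (I : ℕ →₀ ℕ) : mfact I * I.multinomial = (mdeg I).factorial :=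
  Nat.multinomial_spec _ _

theorem factorial_mdeg_div_mfact {K : Type*} [Semifield K] [CharZero K] (I : ℕ →₀ ℕ) :
    ((mdeg I).factorial : K) / mfact I = I.multinomial := by
  rw [← mfact_mul_multinomial, Nat.cast_mul, mul_div_cancel_left₀]
  exact Nat.cast_ne_zero.2 (prod_pos fun _ _ => Nat.factorial_pos _).ne'

noncomputable def mdegTrunc (n m : ℕ) : Finset {I : ℕ →₀ ℕ // mdeg I = n} :=
  ((range m).finsuppAntidiag n).subtype (mdeg · = n)

theorem mem_mdegTrunc {n m : ℕ} {I : {I : ℕ →₀ ℕ // mdeg I = n}} :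
    I ∈ mdegTrunc n m ↔ I.1.support ⊆ range m := by
  rw [mdegTrunc, mem_subtype, mem_finsuppAntidiag']
  exact and_iff_right I.2

theorem tendsto_mdegTrunc (n : ℕ) : Tendsto (mdegTrunc n) atTop atTop := by
  refine tendsto_atTop_finset_of_monotone
    (fun m m' h I hI => mem_mdegTrunc.2 ((mem_mdegTrunc.1 hI).trans (range_mono h)))
    fun I => ⟨I.1.support.sup id + 1, mem_mdegTrunc.2 fun j hj => ?_⟩
  exact mem_range.2 (Nat.lt_succ_of_le (le_sup (f := id) hj))

theorem sum_mdegTrunc {R : Type*} [CommSemiring R] (g : ℕ → R) (n m : ℕ) :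
    ∑ I ∈ mdegTrunc n m, (I.1.multinomial : R) * I.1.prod (fun j k => g j ^ k) =
      (∑ j ∈ range m, g j) ^ n := by
  rw [sum_pow_eq_sum_finsuppAntidiag, mdegTrunc, sum_subtype_eq_sum_filter
    (fun I : ℕ →₀ ℕ => (I.multinomial : R) * I.prod fun j k => g j ^ k)]
  refine sum_congr (filter_true_of_mem fun I hI => ?_) fun _ _ => rfl
  exact (mem_finsuppAntidiag'.1 hI).1

theorem summable_multinomial_mul_prod_of_nonneg {b : ℕ → ℝ} (hb : 0 ≤ b) (hsum : Summable b)
    (n : ℕ) :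
    Summable fun I : {I : ℕ →₀ ℕ // mdeg I = n} =>
      (I.1.multinomial : ℝ) * I.1.prod fun j k => b j ^ k := by
  have hterm (I : ℕ →₀ ℕ) : 0 ≤ (I.multinomial : ℝ) * I.prod fun j k => b j ^ k :=
    mul_nonneg (Nat.cast_nonneg _) (prod_nonneg fun j _ => pow_nonneg (hb j) _)
  refine summable_of_sum_le (c := (∑' j, b j) ^ n) (fun I => hterm I.1) fun T => ?_
  obtain ⟨m, hm⟩ := ((tendsto_mdegTrunc n).eventually (eventually_ge_atTop T)).exists
  calc ∑ I ∈ T, (I.1.multinomial : ℝ) * I.1.prod (fun j k => b j ^ k)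
      ≤ ∑ I ∈ mdegTrunc n m, (I.1.multinomial : ℝ) * I.1.prod (fun j k => b j ^ k) :=
        sum_le_sum_of_subset_of_nonneg hm fun I _ _ => hterm I.1
    _ = (∑ j ∈ range m, b j) ^ n := sum_mdegTrunc b n m
    _ ≤ (∑' j, b j) ^ n := by
        gcongr
        exacts [sum_nonneg fun j _ => hb j, hsum.sum_le_tsum _ fun j _ => hb j]

theorem summable_of_hasSum_fiberwise_of_nonneg {β γ : Type*} {f : β → ℝ} (hf : 0 ≤ f)
    (p : β → γ) {t : γ → ℝ} (ht : ∀ c, HasSum (fun b : {b // p b = c} => f b) (t c))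
    (hsum : Summable t) : Summable f := by
  rw [← (Equiv.sigmaFiberEquiv p).summable_iff]
  exact (summable_sigma_of_nonneg fun _ => hf _).2
    ⟨fun c => (ht c).summable, hsum.congr fun c => (ht c).tsum_eq.symm⟩

theorem hasSum_tsum_of_hasSum_fiberwise {β γ E : Type*} [NormedAddCommGroup E] [CompleteSpace E]
    {f : β → E} (p : β → γ) {s : γ → E}
    (hs : ∀ c, HasSum (fun b : {b // p b = c} => f b) (s c)) (hf : Summable (‖f ·‖)) :
    HasSum f (∑' c, s c) := by
  have h := hf.of_norm.hasSum.tsum_fiberwise p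
  rw [show (fun c => ∑' b : p ⁻¹' {c}, f b) = s from funext fun c => (hs c).tsum_eq] at h
  rw [h.tsum_eq]
  exact hf.of_norm.hasSum

section NormedRing

variable {R : Type*} [NormedCommRing R] [NormOneClass R]

theorem norm_multinomial_mul_prod_le (g : ℕ → R) (I : ℕ →₀ ℕ) :
    ‖(I.multinomial : R) * I.prod fun j k => g j ^ k‖ ≤
      I.multinomial * I.prod fun j k => ‖g j‖ ^ k := by
  refine (norm_mul_le _ _).trans (mul_le_mul ?_ ?_ (norm_nonneg _) (Nat.cast_nonneg _))
  · simpa using Nat.norm_cast_le (α := R) I.multinomial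
  · exact (Finset.norm_prod_le _ _).trans (prod_le_prod (fun _ _ => norm_nonneg _)
      fun _ _ => norm_pow_le _ _)

theorem hasSum_multinomial_mul_prod [CompleteSpace R] {g : ℕ → R} (hg : Summable (‖g ·‖))
    (n : ℕ) :
    HasSum (fun I : {I : ℕ →₀ ℕ // mdeg I = n} =>
      (I.1.multinomial : R) * I.1.prod fun j k => g j ^ k) ((∑' j, g j) ^ n) := by
  have hsum : Summable fun I : {I : ℕ →₀ ℕ // mdeg I = n} =>
      (I.1.multinomial : R) * I.1.prod fun j k => g j ^ k :=
    (summable_multinomial_mul_prod_of_nonneg (fun _ => norm_nonneg _) hg n).of_norm_bounded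
      fun I => norm_multinomial_mul_prod_le g I.1
  convert hsum.hasSum
  refine tendsto_nhds_unique ?_ (hsum.hasSum.comp (tendsto_mdegTrunc n))
  simp_rw [Function.comp_def, sum_mdegTrunc]
  exact hg.of_norm.hasSum.tendsto_sum_nat.pow n

theorem hasSum_multinomial_series [CompleteSpace R] (a g : ℕ → R) (hg : Summable (‖g ·‖))
    (ha : Summable fun n => ‖a n‖ * (∑' j, ‖g j‖) ^ n) :
    HasSum (fun I : ℕ →₀ ℕ => a (mdeg I) * ((I.multinomial : R) * I.prod fun j k => g j ^ k))
      (∑' n, a n * (∑' j, g j) ^ n) := by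
  have hg' : Summable fun j => ‖‖g j‖‖ := by simpa only [norm_norm] using hg
  have hmajorant : Summable fun I : ℕ →₀ ℕ =>
      ‖a (mdeg I)‖ * ((I.multinomial : ℝ) * I.prod fun j k => ‖g j‖ ^ k) := by
    refine summable_of_hasSum_fiberwise_of_nonneg (fun I => ?_) mdeg (fun n => ?_) ha
    · exact mul_nonneg (norm_nonneg _) (mul_nonneg (Nat.cast_nonneg _)
        (prod_nonneg fun _ _ => pow_nonneg (norm_nonneg _) _))
    · refine ((hasSum_multinomial_mul_prod hg' n).mul_left ‖a n‖).congr_fun fun I => ?_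
      rw [I.2]
  refine hasSum_tsum_of_hasSum_fiberwise mdeg (fun n => ?_) (hmajorant.of_nonneg_of_le
    (fun _ => norm_nonneg _) fun I => (norm_mul_le _ _).trans ?_)
  · refine ((hasSum_multinomial_mul_prod hg n).mul_left (a n)).congr_fun fun I => ?_
    rw [I.2]
  · exact mul_le_mul_of_nonneg_left (norm_multinomial_mul_prod_le g I) (norm_nonneg _)

end NormedRing

theorem stmt6_general (lam : ℕ → ℝ) (hlam_sum : Summable lam)
    (u v : lp (fun _ : ℕ => ℂ) 2) (hu : ‖u‖ ≤ 1) (hv : ‖v‖ ≤ 1) :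
    (Summable fun I : ℕ →₀ ℕ =>
      (lam (mdeg I) : ℂ) * ((Nat.factorial (mdeg I) : ℂ) / (mfact I : ℂ)) *
        ∏ j ∈ I.support, ((starRingEnd ℂ) (u j) * v j) ^ I j) ∧
    ∑' I : ℕ →₀ ℕ,
        (lam (mdeg I) : ℂ) * ((Nat.factorial (mdeg I) : ℂ) / (mfact I : ℂ)) *
          ∏ j ∈ I.support, ((starRingEnd ℂ) (u j) * v j) ^ I j =
      ∑' n : ℕ, (lam n : ℂ) * (⟪u, v⟫ : ℂ) ^ n := by
  set w : ℕ → ℂ := fun j => (starRingEnd ℂ) (u j) * v j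
  have hw_norm (j : ℕ) : ‖w j‖ = ‖u j‖ * ‖v j‖ := by simp [w]
  obtain ⟨hw, hw_tsum⟩ := lp.tsum_mul_le_mul_norm (by simpa using Real.HolderConjugate.two_two) u v
  simp_rw [← hw_norm] at hw hw_tsum
  have hw_le_one : ∑' j, ‖w j‖ ≤ 1 := hw_tsum.trans (mul_le_one₀ hu (norm_nonneg v) hv)
  have hlam : Summable fun n => ‖(lam n : ℂ)‖ * (∑' j, ‖w j‖) ^ n := by
    refine hlam_sum.abs.of_nonneg_of_le (fun n => by positivity) fun n => ?_
    rw [Complex.norm_real, Real.norm_eq_abs]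
    exact mul_le_of_le_one_right (abs_nonneg _) (pow_le_one₀ (by positivity) hw_le_one)
  have hinner : ⟪u, v⟫ = ∑' j, w j :=
    (lp.inner_eq_tsum u v).trans (tsum_congr fun j => mul_comm _ _)
  have key := hasSum_multinomial_series (fun n => (lam n : ℂ)) w hw hlam
  simp_rw [← factorial_mdeg_div_mfact (K := ℂ), ← mul_assoc, ← hinner] at key
  exact ⟨key.summable, key.tsum_eq⟩

theorem stmt6 (lam : ℕ → ℝ) (hlam_sum : Summable lam) (hlam_nonneg : ∀ n, 0 ≤ lam n)
    (u v : lp (fun _ : ℕ => ℂ) 2) (hu : ‖u‖ ≤ 1) (hv : ‖v‖ ≤ 1) :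
    (Summable fun I : ℕ →₀ ℕ =>
      (lam (mdeg I) : ℂ) * ((Nat.factorial (mdeg I) : ℂ) / (mfact I : ℂ)) *
        ∏ j ∈ I.support, ((starRingEnd ℂ) (u j) * v j) ^ I j) ∧
    ∑' I : ℕ →₀ ℕ,
        (lam (mdeg I) : ℂ) * ((Nat.factorial (mdeg I) : ℂ) / (mfact I : ℂ)) *
          ∏ j ∈ I.support, ((starRingEnd ℂ) (u j) * v j) ^ I j =
      ∑' n : ℕ, (lam n : ℂ) * (⟪u, v⟫ : ℂ) ^ n :=
  stmt6_general lam hlam_sum u v hu hv
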